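/- The double copresheaf 2-monad 𝔓†𝔓 = (P†P,Y†,S†) on Q-Cat distributes flatly over the presheaf 2-monad 𝔓 by the distributive law Λ† given by Λ†_X = ←(((y_X)_{!†})_*) = ((y_X)_{!†})^!·y_{P†PPX} = (y_X^!)^{†!}·y_{P†PPX}:P†PPX→P(P†PX). -/

import Mathlib

/-!
Common framework: quantaloids, `Q`-categories, `Q`-functors, `Q`-distributors,
(co)presheaf constructions, 2-monads on `Q`-Cat, lax distributive laws over the
presheaf 2-monad, and lax extensions to `Q`-Dist.
-/

set_option autoImplicit false

universe u

namespace QT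

/-- A (small) quantaloid: a category enriched in complete lattices, with
composition preserving suprema in each variable. -/
structure Quantaloid : Type (u + 1) where
  Obj : Type u
  Hom : Obj → Obj → Type u
  lat : ∀ a b, CompleteLattice (Hom a b)
  comp : ∀ {a b c}, Hom b c → Hom a b → Hom a c
  idm : ∀ a, Hom a a
  comp_assoc : ∀ {a b c d} (w : Hom c d) (v : Hom b c) (u : Hom a b),
    comp (comp w v) u = comp w (comp v u)
  comp_idm : ∀ {a b} (u : Hom a b), comp u (idm a) = u
  idm_comp : ∀ {a b} (u : Hom a b), comp (idm b) u = u
  comp_sSup : ∀ {a b c} (v : Hom b c) (S : Set (Hom a b)),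
    comp v (sSup S) = ⨆ u ∈ S, comp v u
  sSup_comp : ∀ {a b c} (S : Set (Hom b c)) (u : Hom a b),
    comp (sSup S) u = ⨆ v ∈ S, comp v u

attribute [instance] Quantaloid.lat

namespace Quantaloid

variable {Q : Quantaloid.{u}}

theorem comp_iSup {a b c : Q.Obj} (v : Q.Hom b c) {ι : Sort*} (f : ι → Q.Hom a b) :
    Q.comp v (⨆ i, f i) = ⨆ i, Q.comp v (f i) := by
  rw [iSup, Q.comp_sSup, iSup_range]

theorem iSup_comp {a b c : Q.Obj} {ι : Sort*} (f : ι → Q.Hom b c) (u : Q.Hom a b) :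
    Q.comp (⨆ i, f i) u = ⨆ i, Q.comp (f i) u := by
  rw [iSup, Q.sSup_comp, iSup_range]

theorem comp_le_comp {a b c : Q.Obj} {v v' : Q.Hom b c} {u u' : Q.Hom a b}
    (hv : v ≤ v') (hu : u ≤ u') : Q.comp v u ≤ Q.comp v' u' := by
  have h1 : Q.comp v' u ≤ Q.comp v' u' := by
    have h := Q.comp_sSup v' {u, u'}
    rw [sSup_pair, sup_eq_right.mpr hu] at h
    rw [h]
    exact le_biSup (fun x => Q.comp v' x) (Set.mem_insert _ _)
  have h2 : Q.comp v u ≤ Q.comp v' u := by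
    have h := Q.sSup_comp {v, v'} u
    rw [sSup_pair, sup_eq_right.mpr hv] at h
    rw [h]
    exact le_biSup (fun x => Q.comp x u) (Set.mem_insert _ _)
  exact le_trans h2 h1

/-- Internal hom `w ↙ u` (right adjoint to `- ∘ u`). -/
def lda {a b c : Q.Obj} (w : Q.Hom a c) (u : Q.Hom a b) : Q.Hom b c :=
  sSup {v | Q.comp v u ≤ w}

/-- Internal hom `v ↘ w` (right adjoint to `v ∘ -`). -/
def rda {a b c : Q.Obj} (v : Q.Hom b c) (w : Q.Hom a c) : Q.Hom a b :=
  sSup {u | Q.comp v u ≤ w}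

theorem le_lda {a b c : Q.Obj} {v : Q.Hom b c} {u : Q.Hom a b} {w : Q.Hom a c} :
    Q.comp v u ≤ w ↔ v ≤ lda w u := by
  constructor
  · exact fun h => le_sSup h
  · intro h
    calc Q.comp v u ≤ Q.comp (lda w u) u := comp_le_comp h le_rfl
      _ ≤ w := by
          rw [lda, Q.sSup_comp]; exact iSup₂_le fun v' hv' => hv'

theorem le_rda {a b c : Q.Obj} {v : Q.Hom b c} {u : Q.Hom a b} {w : Q.Hom a c} :
    Q.comp v u ≤ w ↔ u ≤ rda v w := by
  constructor
  · exact fun h => le_sSup h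
  · intro h
    calc Q.comp v u ≤ Q.comp v (rda v w) := comp_le_comp le_rfl h
      _ ≤ w := by
          rw [rda, Q.comp_sSup]; exact iSup₂_le fun u' hu' => hu'

end Quantaloid

variable {Q : Quantaloid.{u}}

/-- `Q`-relations between families of sets indexed by the objects of `Q`
(i.e. sets over `ob Q`, presented fibrewise). -/
abbrev QRel (Q : Quantaloid.{u}) (X Y : Q.Obj → Type u) : Type u :=
  ∀ p q, X p → Y q → Q.Hom p q

/-- Composition of `Q`-relations. -/
def QRel.comp {X Y Z : Q.Obj → Type u} (ψ : QRel Q Y Z) (φ : QRel Q X Y) : QRel Q X Z :=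
  fun p r x z => ⨆ q, ⨆ y : Y q, Q.comp (ψ q r y z) (φ p q x y)

theorem QRel.comp_mono {X Y Z : Q.Obj → Type u} {ψ ψ' : QRel Q Y Z} {φ φ' : QRel Q X Y}
    (h1 : ψ ≤ ψ') (h2 : φ ≤ φ') : QRel.comp ψ φ ≤ QRel.comp ψ' φ' := by
  intro p r x z
  exact iSup_mono fun q => iSup_mono fun y =>
    Quantaloid.comp_le_comp (h1 q r y z) (h2 p q x y)

theorem QRel.comp_assoc {W X Y Z : Q.Obj → Type u}
    (χ : QRel Q Y Z) (ψ : QRel Q X Y) (φ : QRel Q W X) :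
    QRel.comp (QRel.comp χ ψ) φ = QRel.comp χ (QRel.comp ψ φ) := by
  funext p s w z
  simp only [QRel.comp, Quantaloid.iSup_comp, Quantaloid.comp_iSup]
  apply le_antisymm
  · exact iSup₂_le fun q x => iSup₂_le fun r y =>
      le_iSup_of_le r (le_iSup_of_le y (le_iSup_of_le q (le_iSup_of_le x
        (Q.comp_assoc _ _ _).le)))
  · exact iSup₂_le fun r y => iSup₂_le fun q x =>
      le_iSup_of_le q (le_iSup_of_le x (le_iSup_of_le r (le_iSup_of_le y
        (Q.comp_assoc _ _ _).ge)))

/-- A (small) `Q`-category. -/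
structure QCat (Q : Quantaloid.{u}) : Type (u + 1) where
  el : Q.Obj → Type u
  hom : QRel Q el el
  refl : ∀ p (x : el p), Q.idm p ≤ hom p p x x
  trans : QRel.comp hom hom ≤ hom

/-- Pointwise transitivity in a `Q`-category. -/
theorem QCat.hom_comp_le (X : QCat Q) {p q r : Q.Obj}
    (x : X.el p) (y : X.el q) (z : X.el r) :
    Q.comp (X.hom q r y z) (X.hom p q x y) ≤ X.hom p r x z :=
  le_trans
    (le_iSup_of_le q (le_iSup (fun y' : X.el q => Q.comp (X.hom q r y' z) (X.hom p q x y')) y))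
    (X.trans p r x z)

/-- Any `Q`-relation into a `Q`-category embeds into its post-composite with the hom. -/
theorem QRel.le_hom_comp {W : Q.Obj → Type u} {Z : QCat Q} (ρ : QRel Q W Z.el) :
    ρ ≤ QRel.comp Z.hom ρ := by
  intro p q x z
  calc ρ p q x z = Q.comp (Q.idm q) (ρ p q x z) := (Q.idm_comp _).symm
    _ ≤ Q.comp (Z.hom q q z z) (ρ p q x z) := Quantaloid.comp_le_comp (Z.refl q z) le_rfl
    _ ≤ _ := le_iSup_of_le q
        (le_iSup (fun z' : Z.el q => Q.comp (Z.hom q q z' z) (ρ p q x z')) z)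

/-- Any `Q`-relation out of a `Q`-category embeds into its pre-composite with the hom. -/
theorem QRel.le_comp_hom {X : QCat Q} {W : Q.Obj → Type u} (ρ : QRel Q X.el W) :
    ρ ≤ QRel.comp ρ X.hom := by
  intro p q x z
  calc ρ p q x z = Q.comp (ρ p q x z) (Q.idm p) := (Q.comp_idm _).symm
    _ ≤ Q.comp (ρ p q x z) (X.hom p p x x) := Quantaloid.comp_le_comp le_rfl (X.refl p x)
    _ ≤ _ := le_iSup_of_le p
        (le_iSup (fun x' : X.el p => Q.comp (ρ p q x' z) (X.hom p p x x')) x)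

/-- A `Q`-functor. -/
structure QFun (X Y : QCat Q) : Type u where
  app : ∀ p, X.el p → Y.el p
  mono : ∀ p q (x : X.el p) (x' : X.el q),
    X.hom p q x x' ≤ Y.hom p q (app p x) (app q x')

def QFun.id (X : QCat Q) : QFun X X :=
  ⟨fun _ x => x, fun _ _ _ _ => le_rfl⟩

def QFun.comp {X Y Z : QCat Q} (g : QFun Y Z) (f : QFun X Y) : QFun X Z :=
  ⟨fun p x => g.app p (f.app p x),
   fun p q x x' => le_trans (f.mono p q x x') (g.mono p q (f.app p x) (f.app q x'))⟩

/-- The (pointwise) order of `Q`-functors. -/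
instance {X Y : QCat Q} : Preorder (QFun X Y) where
  le f g := ∀ p (x : X.el p), Q.idm p ≤ Y.hom p p (f.app p x) (g.app p x)
  le_refl f p x := Y.refl p (f.app p x)
  le_trans f g h h1 h2 := by
    intro p x
    calc Q.idm p = Q.comp (Q.idm p) (Q.idm p) := (Q.comp_idm _).symm
      _ ≤ Q.comp (Y.hom p p (g.app p x) (h.app p x)) (Y.hom p p (f.app p x) (g.app p x)) :=
          Quantaloid.comp_le_comp (h2 p x) (h1 p x)
      _ ≤ Y.hom p p (f.app p x) (h.app p x) := Y.hom_comp_le _ _ _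

/-- A `Q`-distributor between `Q`-categories. -/
structure QDist (X Y : QCat Q) : Type u where
  rel : QRel Q X.el Y.el
  compat : QRel.comp Y.hom (QRel.comp rel X.hom) ≤ rel

instance {X Y : QCat Q} : PartialOrder (QDist X Y) where
  le φ ψ := φ.rel ≤ ψ.rel
  le_refl φ := le_refl φ.rel
  le_trans _ _ _ h h' := by
    intro p q x y
    exact le_trans (h p q x y) (h' p q x y)
  le_antisymm φ ψ h h' := by
    have hr : φ.rel = ψ.rel := le_antisymm h h'
    cases φ; cases ψ; cases hr; rfl

theorem QDist.hom_comp_le {X Y : QCat Q} (φ : QDist X Y) :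
    QRel.comp Y.hom φ.rel ≤ φ.rel :=
  le_trans (QRel.comp_mono le_rfl (QRel.le_comp_hom φ.rel)) φ.compat

theorem QDist.comp_hom_le {X Y : QCat Q} (φ : QDist X Y) :
    QRel.comp φ.rel X.hom ≤ φ.rel :=
  le_trans (QRel.le_hom_comp _) φ.compat

theorem QDist.rel_comp_hom {X Y : QCat Q} (φ : QDist X Y) {p q r : Q.Obj}
    (x : X.el p) (x' : X.el q) (y : Y.el r) :
    Q.comp (φ.rel q r x' y) (X.hom p q x x') ≤ φ.rel p r x y :=
  le_trans
    (le_iSup_of_le q (le_iSup (fun x'' : X.el q => Q.comp (φ.rel q r x'' y) (X.hom p q x x'')) x'))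
    (φ.comp_hom_le p r x y)

theorem QDist.hom_comp_rel {X Y : QCat Q} (φ : QDist X Y) {p q r : Q.Obj}
    (x : X.el p) (y : Y.el q) (y' : Y.el r) :
    Q.comp (Y.hom q r y y') (φ.rel p q x y) ≤ φ.rel p r x y' :=
  le_trans
    (le_iSup_of_le q (le_iSup (fun y'' : Y.el q => Q.comp (Y.hom q r y'' y') (φ.rel p q x y'')) y))
    (φ.hom_comp_le p r x y')

/-- Composition of `Q`-distributors. -/
def QDist.comp {X Y Z : QCat Q} (ψ : QDist Y Z) (φ : QDist X Y) : QDist X Z :=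
  ⟨QRel.comp ψ.rel φ.rel, by
    calc QRel.comp Z.hom (QRel.comp (QRel.comp ψ.rel φ.rel) X.hom)
        = QRel.comp (QRel.comp Z.hom ψ.rel) (QRel.comp φ.rel X.hom) := by
          rw [QRel.comp_assoc, QRel.comp_assoc]
      _ ≤ QRel.comp ψ.rel φ.rel :=
          QRel.comp_mono ψ.hom_comp_le φ.comp_hom_le⟩

/-- The identity distributor `1_X^*` on a `Q`-category. -/
def QCat.homDist (X : QCat Q) : QDist X X :=
  ⟨X.hom, le_trans (QRel.comp_mono le_rfl X.trans) X.trans⟩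

/-- The graph `f_*` of a `Q`-functor. -/
def QFun.graph {X Y : QCat Q} (f : QFun X Y) : QDist X Y :=
  ⟨fun p q x y => Y.hom p q (f.app p x) y, by
    intro p q x y
    simp only [QRel.comp, Quantaloid.comp_iSup, Quantaloid.iSup_comp]
    refine iSup₂_le fun q' y' => iSup₂_le fun p' x' => ?_
    calc Q.comp (Y.hom q' q y' y) (Q.comp (Y.hom p' q' (f.app p' x') y') (X.hom p p' x x'))
        ≤ Q.comp (Y.hom q' q y' y)
            (Q.comp (Y.hom p' q' (f.app p' x') y') (Y.hom p p' (f.app p x) (f.app p' x'))) :=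
          Quantaloid.comp_le_comp le_rfl
            (Quantaloid.comp_le_comp le_rfl (f.mono p p' x x'))
      _ ≤ Q.comp (Y.hom q' q y' y) (Y.hom p q' (f.app p x) y') :=
          Quantaloid.comp_le_comp le_rfl (Y.hom_comp_le _ _ _)
      _ ≤ Y.hom p q (f.app p x) y := Y.hom_comp_le _ _ _⟩

/-- The cograph `f^*` of a `Q`-functor. -/
def QFun.cograph {X Y : QCat Q} (f : QFun X Y) : QDist Y X :=
  ⟨fun p q y x => Y.hom p q y (f.app q x), by
    intro p q y x
    simp only [QRel.comp, Quantaloid.comp_iSup, Quantaloid.iSup_comp]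
    refine iSup₂_le fun q' x' => iSup₂_le fun p' y' => ?_
    calc Q.comp (X.hom q' q x' x) (Q.comp (Y.hom p' q' y' (f.app q' x')) (Y.hom p p' y y'))
        ≤ Q.comp (Y.hom q' q (f.app q' x') (f.app q x))
            (Q.comp (Y.hom p' q' y' (f.app q' x')) (Y.hom p p' y y')) :=
          Quantaloid.comp_le_comp (f.mono q' q x' x) le_rfl
      _ ≤ Q.comp (Y.hom q' q (f.app q' x') (f.app q x)) (Y.hom p q' y (f.app q' x')) :=
          Quantaloid.comp_le_comp le_rfl (Y.hom_comp_le _ _ _)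
      _ ≤ Y.hom p q y (f.app q x) := Y.hom_comp_le _ _ _⟩

/-- The presheaf `Q`-category `P X`. -/
def QCat.P (X : QCat Q) : QCat Q where
  el s := { σ : ∀ p, X.el p → Q.Hom p s //
    ∀ p q (x : X.el p) (x' : X.el q), Q.comp (σ q x') (X.hom p q x x') ≤ σ p x }
  hom s s' σ σ' := ⨅ p, ⨅ x : X.el p, Quantaloid.lda (σ'.1 p x) (σ.1 p x)
  refl := by
    intro s σ
    refine le_iInf fun p => le_iInf fun x => Quantaloid.le_lda.mp ?_
    rw [Q.idm_comp]
  trans := by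
    intro s s'' σ σ''
    refine iSup₂_le fun s' σ' => ?_
    refine le_iInf fun p => le_iInf fun x => Quantaloid.le_lda.mp ?_
    rw [Q.comp_assoc]
    have h1 : Q.comp (⨅ p', ⨅ x' : X.el p', Quantaloid.lda (σ'.1 p' x') (σ.1 p' x'))
        (σ.1 p x) ≤ σ'.1 p x :=
      Quantaloid.le_lda.mpr (le_trans (iInf_le _ p) (iInf_le _ x))
    have h2 : Q.comp (⨅ p', ⨅ x' : X.el p', Quantaloid.lda (σ''.1 p' x') (σ'.1 p' x'))
        (σ'.1 p x) ≤ σ''.1 p x :=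
      Quantaloid.le_lda.mpr (le_trans (iInf_le _ p) (iInf_le _ x))
    exact le_trans (Quantaloid.comp_le_comp le_rfl h1) h2

/-- The copresheaf `Q`-category `P† X`. -/
def QCat.Pd (X : QCat Q) : QCat Q where
  el s := { τ : ∀ q, X.el q → Q.Hom s q //
    ∀ p q (x : X.el p) (x' : X.el q), Q.comp (X.hom p q x x') (τ p x) ≤ τ q x' }
  hom s s' τ τ' := ⨅ q, ⨅ x : X.el q, Quantaloid.rda (τ'.1 q x) (τ.1 q x)
  refl := by
    intro s τ
    refine le_iInf fun q => le_iInf fun x => Quantaloid.le_rda.mp ?_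
    rw [Q.comp_idm]
  trans := by
    intro s s'' τ τ''
    refine iSup₂_le fun s' τ' => ?_
    refine le_iInf fun q => le_iInf fun x => Quantaloid.le_rda.mp ?_
    rw [← Q.comp_assoc]
    have h1 : Q.comp (τ''.1 q x)
        (⨅ q', ⨅ x' : X.el q', Quantaloid.rda (τ''.1 q' x') (τ'.1 q' x')) ≤ τ'.1 q x :=
      Quantaloid.le_rda.mpr (le_trans (iInf_le _ q) (iInf_le _ x))
    have h2 : Q.comp (τ'.1 q x)
        (⨅ q', ⨅ x' : X.el q', Quantaloid.rda (τ'.1 q' x') (τ.1 q' x')) ≤ τ.1 q x :=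
      Quantaloid.le_rda.mpr (le_trans (iInf_le _ q) (iInf_le _ x))
    exact le_trans (Quantaloid.comp_le_comp h1 le_rfl) h2

/-- The Yoneda embedding `y_X : X → P X`. -/
def QCat.y (X : QCat Q) : QFun X X.P where
  app p x := ⟨fun q x' => X.hom q p x' x,
    fun p' q' x1 x2 => X.hom_comp_le x1 x2 x⟩
  mono := by
    intro p q x x'
    refine le_iInf fun r => le_iInf fun x'' => Quantaloid.le_lda.mp ?_
    exact X.hom_comp_le x'' x x'

/-- The co-Yoneda embedding `y†_X : X → P† X`. -/
def QCat.yd (X : QCat Q) : QFun X X.Pd where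
  app p x := ⟨fun q x' => X.hom p q x x',
    fun p' q' x1 x2 => X.hom_comp_le x x1 x2⟩
  mono := by
    intro p q x x'
    refine le_iInf fun r => le_iInf fun x'' => Quantaloid.le_rda.mp ?_
    exact X.hom_comp_le x x' x''

/-- `φ^→ : P Y → P X`, `τ ↦ τ ∘ φ`. -/
def QDist.fwd {X Y : QCat Q} (φ : QDist X Y) : QFun Y.P X.P where
  app s τ := ⟨fun p x => ⨆ q, ⨆ y : Y.el q, Q.comp (τ.1 q y) (φ.rel p q x y), by
    intro p q x x'
    rw [Quantaloid.iSup_comp]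
    refine iSup_le fun r => ?_
    rw [Quantaloid.iSup_comp]
    refine iSup_le fun y => ?_
    rw [Q.comp_assoc]
    exact le_iSup_of_le r (le_iSup_of_le y
      (Quantaloid.comp_le_comp le_rfl (φ.rel_comp_hom x x' y)))⟩
  mono := by
    intro s s' τ τ'
    refine le_iInf fun p => le_iInf fun x => Quantaloid.le_lda.mp ?_
    rw [Quantaloid.comp_iSup]
    refine iSup_le fun r => ?_
    rw [Quantaloid.comp_iSup]
    refine iSup_le fun y => ?_
    rw [← Q.comp_assoc]
    have h : Q.comp (Y.P.hom s s' τ τ') (τ.1 r y) ≤ τ'.1 r y :=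
      Quantaloid.le_lda.mpr (le_trans (iInf_le _ r) (iInf_le _ y))
    exact le_iSup_of_le r (le_iSup_of_le y (Quantaloid.comp_le_comp h le_rfl))

/-- `φ^↞ : P† X → P† Y`, `σ ↦ φ ∘ σ`. -/
def QDist.bwd {X Y : QCat Q} (φ : QDist X Y) : QFun X.Pd Y.Pd where
  app s σ := ⟨fun q y => ⨆ p, ⨆ x : X.el p, Q.comp (φ.rel p q x y) (σ.1 p x), by
    intro p q y y'
    rw [Quantaloid.comp_iSup]
    refine iSup_le fun r => ?_
    rw [Quantaloid.comp_iSup]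
    refine iSup_le fun x => ?_
    rw [← Q.comp_assoc]
    exact le_iSup_of_le r (le_iSup_of_le x
      (Quantaloid.comp_le_comp (φ.hom_comp_rel x y y') le_rfl))⟩
  mono := by
    intro s s' σ σ'
    refine le_iInf fun q => le_iInf fun y => Quantaloid.le_rda.mp ?_
    rw [Quantaloid.iSup_comp]
    refine iSup_le fun r => ?_
    rw [Quantaloid.iSup_comp]
    refine iSup_le fun x => ?_
    rw [Q.comp_assoc]
    have h : Q.comp (σ'.1 r x) (X.Pd.hom s s' σ σ') ≤ σ.1 r x :=
      Quantaloid.le_rda.mpr (le_trans (iInf_le _ r) (iInf_le _ x))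
    exact le_iSup_of_le r (le_iSup_of_le x (Quantaloid.comp_le_comp le_rfl h))

/-- `φ_→ : P X → P Y`, `σ ↦ σ ↙ φ`. -/
def QDist.fwdr {X Y : QCat Q} (φ : QDist X Y) : QFun X.P Y.P where
  app s σ := ⟨fun q y => ⨅ p, ⨅ x : X.el p, Quantaloid.lda (σ.1 p x) (φ.rel p q x y), by
    intro q q' y y'
    refine le_iInf fun p => le_iInf fun x => Quantaloid.le_lda.mp ?_
    rw [Q.comp_assoc]
    have h1 : Q.comp (Y.hom q q' y y') (φ.rel p q x y) ≤ φ.rel p q' x y' :=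
      φ.hom_comp_rel x y y'
    have h2 : Q.comp ((⨅ p', ⨅ x' : X.el p',
        Quantaloid.lda (σ.1 p' x') (φ.rel p' q' x' y')) : Q.Hom q' s) (φ.rel p q' x y')
        ≤ σ.1 p x :=
      Quantaloid.le_lda.mpr (le_trans (iInf_le _ p) (iInf_le _ x))
    exact le_trans (Quantaloid.comp_le_comp le_rfl h1) h2⟩
  mono := by
    intro s s' σ σ'
    refine le_iInf fun q => le_iInf fun y => Quantaloid.le_lda.mp ?_
    refine le_iInf fun p => le_iInf fun x => Quantaloid.le_lda.mp ?_
    rw [Q.comp_assoc]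
    have h1 : Q.comp ((⨅ p', ⨅ x' : X.el p',
        Quantaloid.lda (σ.1 p' x') (φ.rel p' q x' y)) : Q.Hom q s) (φ.rel p q x y)
        ≤ σ.1 p x :=
      Quantaloid.le_lda.mpr (le_trans (iInf_le _ p) (iInf_le _ x))
    have h2 : Q.comp (X.P.hom s s' σ σ') (σ.1 p x) ≤ σ'.1 p x :=
      Quantaloid.le_lda.mpr (le_trans (iInf_le _ p) (iInf_le _ x))
    exact le_trans (Quantaloid.comp_le_comp le_rfl h1) h2

/-- Isbell `φ↑ : P X → P† Y`, `σ ↦ φ ↙ σ`. -/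
def QDist.up {X Y : QCat Q} (φ : QDist X Y) : QFun X.P Y.Pd where
  app s σ := ⟨fun q y => ⨅ p, ⨅ x : X.el p, Quantaloid.lda (φ.rel p q x y) (σ.1 p x), by
    intro q q' y y'
    refine le_iInf fun p => le_iInf fun x => Quantaloid.le_lda.mp ?_
    rw [Q.comp_assoc]
    have h1 : Q.comp ((⨅ p', ⨅ x' : X.el p',
        Quantaloid.lda (φ.rel p' q x' y) (σ.1 p' x')) : Q.Hom s q) (σ.1 p x)
        ≤ φ.rel p q x y :=
      Quantaloid.le_lda.mpr (le_trans (iInf_le _ p) (iInf_le _ x))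
    exact le_trans (Quantaloid.comp_le_comp le_rfl h1) (φ.hom_comp_rel x y y')⟩
  mono := by
    intro s s' σ σ'
    refine le_iInf fun q => le_iInf fun y => Quantaloid.le_rda.mp ?_
    refine le_iInf fun p => le_iInf fun x => Quantaloid.le_lda.mp ?_
    rw [Q.comp_assoc]
    have h1 : Q.comp (X.P.hom s s' σ σ') (σ.1 p x) ≤ σ'.1 p x :=
      Quantaloid.le_lda.mpr (le_trans (iInf_le _ p) (iInf_le _ x))
    have h2 : Q.comp ((⨅ p', ⨅ x' : X.el p',
        Quantaloid.lda (φ.rel p' q x' y) (σ'.1 p' x')) : Q.Hom s' q) (σ'.1 p x)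
        ≤ φ.rel p q x y :=
      Quantaloid.le_lda.mpr (le_trans (iInf_le _ p) (iInf_le _ x))
    exact le_trans (Quantaloid.comp_le_comp le_rfl h1) h2

/-- Isbell `φ↓ : P† Y → P X`, `τ ↦ τ ↘ φ`. -/
def QDist.down {X Y : QCat Q} (φ : QDist X Y) : QFun Y.Pd X.P where
  app s τ := ⟨fun p x => ⨅ q, ⨅ y : Y.el q, Quantaloid.rda (τ.1 q y) (φ.rel p q x y), by
    intro p p' x x'
    refine le_iInf fun q => le_iInf fun y => Quantaloid.le_rda.mp ?_
    rw [← Q.comp_assoc]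
    have h1 : Q.comp (τ.1 q y) ((⨅ q', ⨅ y' : Y.el q',
        Quantaloid.rda (τ.1 q' y') (φ.rel p' q' x' y')) : Q.Hom p' s)
        ≤ φ.rel p' q x' y :=
      Quantaloid.le_rda.mpr (le_trans (iInf_le _ q) (iInf_le _ y))
    exact le_trans (Quantaloid.comp_le_comp h1 le_rfl) (φ.rel_comp_hom x x' y)⟩
  mono := by
    intro s s' τ τ'
    refine le_iInf fun p => le_iInf fun x => Quantaloid.le_lda.mp ?_
    refine le_iInf fun q => le_iInf fun y => Quantaloid.le_rda.mp ?_
    rw [← Q.comp_assoc]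
    have h1 : Q.comp (τ'.1 q y) (Y.Pd.hom s s' τ τ') ≤ τ.1 q y :=
      Quantaloid.le_rda.mpr (le_trans (iInf_le _ q) (iInf_le _ y))
    have h2 : Q.comp (τ.1 q y) ((⨅ q', ⨅ y' : Y.el q',
        Quantaloid.rda (τ.1 q' y') (φ.rel p q' x y')) : Q.Hom p s)
        ≤ φ.rel p q x y :=
      Quantaloid.le_rda.mpr (le_trans (iInf_le _ q) (iInf_le _ y))
    exact le_trans (Quantaloid.comp_le_comp h1 le_rfl) h2

/-- The transpose `←φ : Y → P X` of a distributor `φ : X ⇸ Y`. -/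
def QDist.transpose {X Y : QCat Q} (φ : QDist X Y) : QFun Y X.P where
  app q y := ⟨fun p x => φ.rel p q x y,
    fun p q' x x' => φ.rel_comp_hom x x' y⟩
  mono := by
    intro q q' y y'
    refine le_iInf fun p => le_iInf fun x => Quantaloid.le_lda.mp ?_
    exact φ.hom_comp_rel x y y'

/-- The inverse of transposition. -/
def QFun.untranspose {X Y : QCat Q} (g : QFun Y X.P) : QDist X Y :=
  ⟨fun p q x y => (g.app q y).1 p x, by
    intro p q x y
    simp only [QRel.comp, Quantaloid.comp_iSup, Quantaloid.iSup_comp]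
    refine iSup₂_le fun q' y' => iSup₂_le fun p' x' => ?_
    have h1 : Q.comp ((g.app q' y').1 p' x') (X.hom p p' x x') ≤ (g.app q' y').1 p x :=
      (g.app q' y').2 p p' x x'
    have h2 : Q.comp (Y.hom q' q y' y) ((g.app q' y').1 p x) ≤ (g.app q y).1 p x :=
      Quantaloid.le_lda.mpr
        (le_trans (g.mono q' q y' y) (le_trans (iInf_le _ p) (iInf_le _ x)))
    exact le_trans (Quantaloid.comp_le_comp le_rfl h1) h2⟩

/-- `f_! := (f^*)^→ : P X → P Y`. -/
def pshf {X Y : QCat Q} (f : QFun X Y) : QFun X.P Y.P := f.cograph.fwd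

/-- `f^! := (f_*)^→ : P Y → P X`. -/
def pshb {X Y : QCat Q} (f : QFun X Y) : QFun Y.P X.P := f.graph.fwd

/-- `f_† := (f_*)^↞ : P† X → P† Y`. -/
def cpsf {X Y : QCat Q} (f : QFun X Y) : QFun X.Pd Y.Pd := f.graph.bwd

/-- `f^† := (f^*)^↞ : P† Y → P† X`. -/
def cpsb {X Y : QCat Q} (f : QFun X Y) : QFun Y.Pd X.Pd := f.cograph.bwd

/-- `sup_{P X} = y_X^! : P P X → P X`: the multiplication of the presheaf 2-monad. -/
def supP (X : QCat Q) : QFun X.P.P X.P := pshb X.y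

/-- `inf_{P† X} = (y†_X)^† : P† P† X → P† X`: the multiplication of the copresheaf
2-monad. -/
def infPd (X : QCat Q) : QFun X.Pd.Pd X.Pd := cpsb X.yd

/-- Adjunction `f ⊣ g` in `Q`-Cat. -/
def QAdj {X Y : QCat Q} (f : QFun X Y) (g : QFun Y X) : Prop :=
  QFun.id X ≤ g.comp f ∧ f.comp g ≤ QFun.id Y

/-- Fully faithful `Q`-functors. -/
def QFun.FullyFaithful {X Y : QCat Q} (f : QFun X Y) : Prop :=
  ∀ p q (x : X.el p) (x' : X.el q), X.hom p q x x' = Y.hom p q (f.app p x) (f.app q x')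

/-- A `Q`-closure operation on a `Q`-category. -/
def IsClosureOp (Z : QCat Q) (c : QFun Z Z) : Prop :=
  QFun.id Z ≤ c ∧ c.comp c = c

/-- A 2-functor on `Q`-Cat. -/
structure TwoFunctor (Q : Quantaloid.{u}) : Type (u + 1) where
  obj : QCat Q → QCat Q
  map : ∀ {X Y : QCat Q}, QFun X Y → QFun (obj X) (obj Y)
  map_id : ∀ X : QCat Q, map (QFun.id X) = QFun.id (obj X)
  map_comp : ∀ {X Y Z : QCat Q} (g : QFun Y Z) (f : QFun X Y),
    map (g.comp f) = (map g).comp (map f)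
  map_mono : ∀ {X Y : QCat Q} {f g : QFun X Y}, f ≤ g → map f ≤ map g

/-- A 2-monad on `Q`-Cat. -/
structure TwoMonad (Q : Quantaloid.{u}) extends TwoFunctor Q where
  unit : ∀ X : QCat Q, QFun X (obj X)
  mult : ∀ X : QCat Q, QFun (obj (obj X)) (obj X)
  unit_nat : ∀ {X Y : QCat Q} (f : QFun X Y), (unit Y).comp f = (map f).comp (unit X)
  mult_nat : ∀ {X Y : QCat Q} (f : QFun X Y),
    (mult Y).comp (map (map f)) = (map f).comp (mult X)
  mult_unit : ∀ X : QCat Q, (mult X).comp (unit (obj X)) = QFun.id (obj X)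
  mult_map_unit : ∀ X : QCat Q, (mult X).comp (map (unit X)) = QFun.id (obj X)
  mult_assoc : ∀ X : QCat Q, (mult X).comp (map (mult X)) = (mult X).comp (mult (obj X))

/-- The type of families `λ_X : T P X → P T X`. -/
abbrev LamFamily (T : TwoFunctor Q) : Type (u + 1) :=
  ∀ X : QCat Q, QFun (T.obj X.P) ((T.obj X).P)

/-- Lax naturality law (a): `(Tf)_! ∘ λ_X ≤ λ_Y ∘ T(f_!)`. -/
def LawA (T : TwoFunctor Q) (lam : LamFamily T) : Prop :=
  ∀ (X Y : QCat Q) (f : QFun X Y),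
    (pshf (T.map f)).comp (lam X) ≤ (lam Y).comp (T.map (pshf f))

/-- Lax `P`-unit law (b): `y_{TX} ≤ λ_X ∘ T y_X`. -/
def LawB (T : TwoFunctor Q) (lam : LamFamily T) : Prop :=
  ∀ X : QCat Q, QCat.y (T.obj X) ≤ (lam X).comp (T.map X.y)

/-- The `P`-unit law (b) holding strictly (flatness). -/
def LawBstrict (T : TwoFunctor Q) (lam : LamFamily T) : Prop :=
  ∀ X : QCat Q, (lam X).comp (T.map X.y) = QCat.y (T.obj X)

/-- Lax `P`-multiplication law (c): `s_{TX} ∘ (λ_X)_! ∘ λ_{PX} ≤ λ_X ∘ T s_X`. -/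
def LawC (T : TwoFunctor Q) (lam : LamFamily T) : Prop :=
  ∀ X : QCat Q,
    (supP (T.obj X)).comp ((pshf (lam X)).comp (lam X.P)) ≤ (lam X).comp (T.map (supP X))

/-- Lax `T`-unit law (d): `(e_X)_! ≤ λ_X ∘ e_{PX}`. -/
def LawD (M : TwoMonad Q) (lam : LamFamily M.toTwoFunctor) : Prop :=
  ∀ X : QCat Q, pshf (M.unit X) ≤ (lam X).comp (M.unit X.P)

/-- Lax `T`-multiplication law (e): `(m_X)_! ∘ λ_{TX} ∘ T λ_X ≤ λ_X ∘ m_{PX}`. -/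
def LawE (M : TwoMonad Q) (lam : LamFamily M.toTwoFunctor) : Prop :=
  ∀ X : QCat Q,
    (pshf (M.mult X)).comp ((lam (M.obj X)).comp (M.map (lam X))) ≤ (lam X).comp (M.mult X.P)

def IsDistLawABC (T : TwoFunctor Q) (lam : LamFamily T) : Prop :=
  LawA T lam ∧ LawB T lam ∧ LawC T lam

/-- A (lax) distributive law of the 2-monad `M` over the presheaf 2-monad. -/
def IsDistLaw (M : TwoMonad Q) (lam : LamFamily M.toTwoFunctor) : Prop :=
  IsDistLawABC M.toTwoFunctor lam ∧ LawD M lam ∧ LawE M lam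

/-- A flat distributive law: (b) holds strictly. -/
def IsFlatDistLaw (M : TwoMonad Q) (lam : LamFamily M.toTwoFunctor) : Prop :=
  IsDistLaw M lam ∧ LawBstrict M.toTwoFunctor lam

/-- Lax `λ`-algebra: laws (f) and (g). -/
def IsLaxAlg (M : TwoMonad Q) (lam : LamFamily M.toTwoFunctor) (X : QCat Q)
    (p : QFun (M.obj X) X.P) : Prop :=
  X.y ≤ p.comp (M.unit X) ∧
  (supP X).comp ((pshf p).comp ((lam X).comp (M.map p))) ≤ p.comp (M.mult X)

/-- Lax `λ`-homomorphism: law (h). -/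
def IsLaxHom (M : TwoMonad Q) {X Y : QCat Q}
    (p : QFun (M.obj X) X.P) (q : QFun (M.obj Y) Y.P) (f : QFun X Y) : Prop :=
  (pshf f).comp p ≤ q.comp (M.map f)

/-- The type of families `T̂φ : TX ⇸ TY`, one for each `φ : X ⇸ Y`. -/
abbrev ExtFamily (T : TwoFunctor Q) : Type (u + 1) :=
  ∀ ⦃X Y : QCat Q⦄, QDist X Y → QDist (T.obj X) (T.obj Y)

/-- A lax extension of the 2-functor `T` to `Q`-Dist: conditions (1), (2), (3). -/
def IsLaxExt (T : TwoFunctor Q) (ext : ExtFamily T) : Prop :=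
  (∀ (X Y : QCat Q) (φ φ' : QDist X Y), φ ≤ φ' → ext φ ≤ ext φ') ∧
  (∀ (X Y Z : QCat Q) (φ : QDist X Y) (ψ : QDist Y Z), (ext ψ).comp (ext φ) ≤ ext (ψ.comp φ)) ∧
  (∀ (X Y : QCat Q) (f : QFun X Y),
    (T.map f).graph ≤ ext f.graph ∧ (T.map f).cograph ≤ ext f.cograph)

/-- Condition (4): `φ ∘ e_X^* ≤ e_Y^* ∘ T̂φ`. -/
def ExtLaw4 (M : TwoMonad Q) (ext : ExtFamily M.toTwoFunctor) : Prop :=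
  ∀ (X Y : QCat Q) (φ : QDist X Y),
    φ.comp (M.unit X).cograph ≤ ((M.unit Y).cograph).comp (ext φ)

/-- Condition (5): `T̂T̂φ ∘ m_X^* ≤ m_Y^* ∘ T̂φ`. -/
def ExtLaw5 (M : TwoMonad Q) (ext : ExtFamily M.toTwoFunctor) : Prop :=
  ∀ (X Y : QCat Q) (φ : QDist X Y),
    (ext (ext φ)).comp (M.mult X).cograph ≤ ((M.mult Y).cograph).comp (ext φ)

/-- A lax extension of the 2-monad `M` to `Q`-Dist. -/
def IsMonadLaxExt (M : TwoMonad Q) (ext : ExtFamily M.toTwoFunctor) : Prop :=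
  IsLaxExt M.toTwoFunctor ext ∧ ExtLaw4 M ext ∧ ExtLaw5 M ext

/-- Flatness of a lax extension: `T̂ 1_X^* = 1_{TX}^*`. -/
def FlatExt (T : TwoFunctor Q) (ext : ExtFamily T) : Prop :=
  ∀ X : QCat Q, ext X.homDist = (T.obj X).homDist

/-- From a lax distributive law to a lax extension: `←(T̂φ) = λ_X ∘ T(←φ)`. -/
def PhiExt (T : TwoFunctor Q) (lam : LamFamily T) : ExtFamily T :=
  fun X Y φ => QFun.untranspose ((lam X).comp (T.map φ.transpose))

/-- From a lax extension to a lax distributive law: `λ_X = ←(T̂((y_X)_*))`. -/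
def PsiLam (T : TwoFunctor Q) (ext : ExtFamily T) : LamFamily T :=
  fun X => (ext X.y.graph).transpose

/-- The canonical lax extension `T̂φ = (T ←φ)^* ∘ (T y_X)_*`. -/
def hatExt (T : TwoFunctor Q) : ExtFamily T :=
  fun X Y φ => ((T.map φ.transpose).cograph).comp (T.map X.y).graph

/-- `λ_X = y_{PX} ∘ sup_{PX}`: the flat distributive law of `P` over itself. -/
def lamP (X : QCat Q) : QFun X.P.P X.P.P := (QCat.y X.P).comp (supP X)

/-- `λ†_X = ((y_X)_†)^! ∘ y_{P†PX}`: the strict distributive law of `P†` over `P`. -/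
def lamd (X : QCat Q) : QFun X.P.Pd X.Pd.P := (pshb (cpsf X.y)).comp (QCat.y X.P.Pd)

/-- `Λ_X = y_{PP†X} ∘ ((y_X)_†)^!`: the flat distributive law of `P P†` over `P`. -/
def LamPPd (X : QCat Q) : QFun X.P.Pd.P X.Pd.P.P := (QCat.y X.Pd.P).comp (pshb (cpsf X.y))

/-- The multiplication `S_X = s_{P†X} ∘ (y†_{PP†X})^!` of the double presheaf 2-monad. -/
def Smult (X : QCat Q) : QFun X.Pd.P.Pd.P X.Pd.P := (supP X.Pd).comp (pshb (QCat.yd X.Pd.P))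

/-- `Λ†_X = (y_X^!)^{†!} ∘ y_{P†PPX}`: the flat distributive law of `P† P` over `P`. -/
def LamPdP (X : QCat Q) : QFun X.P.P.Pd X.P.Pd.P :=
  (pshf (cpsf (supP X))).comp (QCat.y X.P.P.Pd)

/-- The multiplication `S†_X = s†_{PX} ∘ (y_{P†PX})^†` of the double copresheaf
2-monad. -/
def Sdmult (X : QCat Q) : QFun X.P.Pd.P.Pd X.P.Pd := (infPd X.P).comp (cpsb (QCat.y X.P.Pd))

/-- Pointwise infimum of a family of `Q`-functors into a presheaf `Q`-category. -/
def QFun.iInfP {ι : Type u} {Z X : QCat Q} (F : ι → QFun Z X.P) : QFun Z X.P where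
  app s z := ⟨fun p x => ⨅ i, ((F i).app s z).1 p x, by
    intro p q x x'
    refine le_iInf fun i => ?_
    exact le_trans
      (Quantaloid.comp_le_comp (iInf_le (fun i => ((F i).app s z).1 q x') i) le_rfl)
      (((F i).app s z).2 p q x x')⟩
  mono := by
    intro s s' z z'
    refine le_iInf fun p => le_iInf fun x => Quantaloid.le_lda.mp ?_
    refine le_iInf fun i => ?_
    have h1 : Q.comp (Z.hom s s' z z') (⨅ j, ((F j).app s z).1 p x)
        ≤ Q.comp (Z.hom s s' z z') (((F i).app s z).1 p x) :=
      Quantaloid.comp_le_comp le_rfl (iInf_le _ i)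
    have h2 : Q.comp (Z.hom s s' z z') (((F i).app s z).1 p x)
        ≤ ((F i).app s' z').1 p x :=
      Quantaloid.le_lda.mpr
        (le_trans ((F i).mono s s' z z') (le_trans (iInf_le _ p) (iInf_le _ x)))
    exact le_trans h1 h2

/-!
`Λ†_X` is the transpose `←(G_*)` of the graph of `G = (y_X)_{!†}`, so `Λ†_X V` is the presheaf
`τ ↦ P†PPX(G τ, V)`. Everything follows from a few facts about such transposes: a commuting
square of `Q`-functors gives the lax naturality (a); a fully faithful `G` (here `y_X`, hence
`(y_X)_!` and `(y_X)_{!†}`, are fully faithful) gives the strict unit law (b); a retraction of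
the next such `G'` (here `s_X ⊣ y_{PX}` with `s_X · y_{PX} = 1`) gives (c). The unit law (d)
reduces to (b) on representables because `f_!` is the least `F` with `y · f ≤ F · y`. For (e)
one writes `Λ†_X = (s_X)_{†!} · y`, which turns both sides into `φ_! · y` for maps `φ` of the
form `ψ^†`; since `ψ ↦ ψ^†` is antitone, it remains to compare two Yoneda-type maps
`PX → P(P†PPX)` pointwise.
-/

section

open Quantaloid

@[ext]
theorem QFun.ext {X Y : QCat Q} {f g : QFun X Y} (h : ∀ s x, f.app s x = g.app s x) :
    f = g := by
  cases f; cases g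
  congr
  funext s x
  exact h s x

theorem QFun.comp_assoc {W X Y Z : QCat Q} (h : QFun Y Z) (g : QFun X Y) (f : QFun W X) :
    (h.comp g).comp f = h.comp (g.comp f) :=
  rfl

theorem QCat.le_comp_hom_self (X : QCat Q) {p c : Q.Obj} (a : Q.Hom p c) (x : X.el p) :
    a ≤ Q.comp a (X.hom p p x x) :=
  (Q.comp_idm a).symm.le.trans (comp_le_comp le_rfl (X.refl p x))

theorem QCat.le_hom_self_comp (X : QCat Q) {c p : Q.Obj} (a : Q.Hom c p) (x : X.el p) :
    a ≤ Q.comp (X.hom p p x x) a :=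
  (Q.idm_comp a).symm.le.trans (comp_le_comp (X.refl p x) le_rfl)

theorem QCat.hom_mono_right (Y : QCat Q) {p q : Q.Obj} {y : Y.el p} {a b : Y.el q}
    (h : Q.idm q ≤ Y.hom q q a b) : Y.hom p q y a ≤ Y.hom p q y b :=
  (Q.idm_comp _).symm.le.trans ((comp_le_comp h le_rfl).trans (Y.hom_comp_le _ _ _))

theorem QCat.hom_anti_left (Y : QCat Q) {p q : Q.Obj} {a b : Y.el p} {y : Y.el q}
    (h : Q.idm p ≤ Y.hom p p a b) : Y.hom p q b y ≤ Y.hom p q a y :=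
  (Q.comp_idm _).symm.le.trans ((comp_le_comp le_rfl h).trans (Y.hom_comp_le _ _ _))

theorem QCat.P_hom_comp_le (X : QCat Q) {s s' p : Q.Obj} (σ : X.P.el s) (σ' : X.P.el s')
    (x : X.el p) : Q.comp (X.P.hom s s' σ σ') (σ.1 p x) ≤ σ'.1 p x :=
  le_lda.mpr ((iInf_le _ p).trans (iInf_le _ x))

theorem QCat.comp_Pd_hom_le (X : QCat Q) {s s' q : Q.Obj} (τ : X.Pd.el s) (τ' : X.Pd.el s')
    (x : X.el q) : Q.comp (τ'.1 q x) (X.Pd.hom s s' τ τ') ≤ τ.1 q x :=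
  le_rda.mpr ((iInf_le _ q).trans (iInf_le _ x))

theorem QCat.P_hom_y_app (X : QCat Q) {p s : Q.Obj} (x : X.el p) (σ : X.P.el s) :
    X.P.hom p s (X.y.app p x) σ = σ.1 p x :=
  le_antisymm ((X.le_comp_hom_self _ x).trans (X.P_hom_comp_le _ σ x))
    (le_iInf₂ fun q x' => le_lda.mp (σ.2 q p x' x))

theorem QCat.Pd_hom_yd_app (X : QCat Q) {s q : Q.Obj} (τ : X.Pd.el s) (x : X.el q) :
    X.Pd.hom s q τ (X.yd.app q x) = τ.1 q x :=
  le_antisymm ((X.le_hom_self_comp _ x).trans (X.comp_Pd_hom_le τ (X.yd.app q x) x))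
    (le_iInf₂ fun q' x' => le_rda.mp (τ.2 q q' x x'))

theorem QCat.y_fullyFaithful (X : QCat Q) : X.y.FullyFaithful := fun _ q _ x' =>
  (X.P_hom_y_app _ (X.y.app q x')).symm

theorem QFun.le_P_iff {Z X : QCat Q} {f g : QFun Z X.P} :
    f ≤ g ↔ ∀ s (z : Z.el s) p (x : X.el p), (f.app s z).1 p x ≤ (g.app s z).1 p x := by
  refine ⟨fun h s z p x => ?_, fun h s z => le_iInf₂ fun p x => le_lda.mp ?_⟩
  · simpa only [Q.idm_comp] using (comp_le_comp (h s z) le_rfl).trans (X.P_hom_comp_le _ _ x)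
  · rw [Q.idm_comp]
    exact h s z p x

theorem QFun.le_Pd_iff {Z X : QCat Q} {f g : QFun Z X.Pd} :
    f ≤ g ↔ ∀ s (z : Z.el s) q (x : X.el q), (g.app s z).1 q x ≤ (f.app s z).1 q x := by
  refine ⟨fun h s z q x => ?_, fun h s z => le_iInf₂ fun q x => le_rda.mp ?_⟩
  · simpa only [Q.comp_idm] using (comp_le_comp le_rfl (h s z)).trans (X.comp_Pd_hom_le _ _ x)
  · rw [Q.comp_idm]
    exact h s z q x

theorem QFun.comp_le_comp_right {X Y Z : QCat Q} {f g : QFun Y Z} (hfg : f ≤ g) (k : QFun X Y) :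
    f.comp k ≤ g.comp k := fun p x => hfg p (k.app p x)

theorem pshb_app {X Y : QCat Q} (f : QFun X Y) {s p : Q.Obj} (σ : Y.P.el s) (x : X.el p) :
    ((pshb f).app s σ).1 p x = σ.1 p (f.app p x) :=
  le_antisymm (iSup₂_le fun _ y => σ.2 p _ (f.app p x) y)
    ((Y.le_comp_hom_self _ (f.app p x)).trans (le_iSup₂_of_le p (f.app p x) le_rfl))

theorem cpsb_app {X Y : QCat Q} (f : QFun X Y) {s q : Q.Obj} (τ : Y.Pd.el s) (x : X.el q) :
    ((cpsb f).app s τ).1 q x = τ.1 q (f.app q x) :=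
  le_antisymm (iSup₂_le fun _ y => τ.2 _ q y (f.app q x))
    ((Y.le_hom_self_comp _ (f.app q x)).trans (le_iSup₂_of_le q (f.app q x) le_rfl))

theorem supP_app_y_app {X : QCat Q} {s : Q.Obj} (σ : X.P.el s) :
    (supP X).app s ((QCat.y X.P).app s σ) = σ :=
  Subtype.ext <| funext fun _ => funext fun x => (pshb_app X.y _ x).trans (X.P_hom_y_app x σ)

theorem supP_comp_y (X : QCat Q) : (supP X).comp (QCat.y X.P) = QFun.id X.P :=
  QFun.ext fun _ σ => supP_app_y_app σ

theorem pshf_mono {X Y : QCat Q} {f g : QFun X Y} (h : f ≤ g) : pshf f ≤ pshf g :=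
  QFun.le_P_iff.mpr fun _ _ _ _ => iSup₂_le fun q x =>
    le_iSup₂_of_le q x (comp_le_comp le_rfl (Y.hom_mono_right (h q x)))

theorem cpsb_le_cpsb {X Y : QCat Q} {f g : QFun X Y} (h : f ≤ g) : cpsb g ≤ cpsb f :=
  QFun.le_Pd_iff.mpr fun s τ q x => by
    rw [cpsb_app, cpsb_app]
    exact (Q.idm_comp _).symm.le.trans ((comp_le_comp (h q x) le_rfl).trans (τ.2 q q _ _))

theorem pshf_id (X : QCat Q) : pshf (QFun.id X) = QFun.id X.P :=
  QFun.ext fun _ σ => Subtype.ext <| funext fun p => funext fun x =>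
    le_antisymm (iSup₂_le fun q x' => σ.2 p q x x')
      ((X.le_comp_hom_self (σ.1 p x) x).trans (le_iSup₂_of_le p x le_rfl))

theorem cpsf_id (X : QCat Q) : cpsf (QFun.id X) = QFun.id X.Pd :=
  QFun.ext fun _ τ => Subtype.ext <| funext fun q => funext fun x =>
    le_antisymm (iSup₂_le fun p x' => τ.2 p q x' x)
      ((X.le_hom_self_comp (τ.1 q x) x).trans (le_iSup₂_of_le q x le_rfl))

theorem pshf_comp {X Y Z : QCat Q} (g : QFun Y Z) (f : QFun X Y) :
    pshf (g.comp f) = (pshf g).comp (pshf f) := by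
  refine QFun.ext fun s σ => Subtype.ext <| funext fun r => funext fun z => le_antisymm ?_ ?_
  · refine iSup₂_le fun q x => le_iSup₂_of_le q (f.app q x) (comp_le_comp ?_ le_rfl)
    exact (Y.le_comp_hom_self (σ.1 q x) (f.app q x)).trans (le_iSup₂_of_le q x le_rfl)
  · refine iSup₂_le fun q' y => ?_
    show Q.comp (⨆ q, ⨆ x : X.el q, Q.comp (σ.1 q x) (Y.hom q' q y (f.app q x)))
      (Z.hom r q' z (g.app q' y)) ≤ _
    simp only [iSup_comp, Q.comp_assoc]
    refine iSup₂_le fun q x => le_iSup₂_of_le q x (comp_le_comp le_rfl ?_)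
    exact (comp_le_comp (g.mono _ _ _ _) le_rfl).trans (Z.hom_comp_le _ _ _)

theorem cpsf_comp {X Y Z : QCat Q} (g : QFun Y Z) (f : QFun X Y) :
    cpsf (g.comp f) = (cpsf g).comp (cpsf f) := by
  refine QFun.ext fun s τ => Subtype.ext <| funext fun r => funext fun z => le_antisymm ?_ ?_
  · refine iSup₂_le fun p x => le_iSup₂_of_le p (f.app p x) (comp_le_comp le_rfl ?_)
    exact (Y.le_hom_self_comp (τ.1 p x) (f.app p x)).trans (le_iSup₂_of_le p x le_rfl)
  · refine iSup₂_le fun q y => ?_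
    show Q.comp (Z.hom q r (g.app q y) z)
      (⨆ p, ⨆ x : X.el p, Q.comp (Y.hom p q (f.app p x) y) (τ.1 p x)) ≤ _
    simp only [comp_iSup, ← Q.comp_assoc]
    refine iSup₂_le fun p x => le_iSup₂_of_le p x (comp_le_comp ?_ le_rfl)
    exact (comp_le_comp le_rfl (g.mono _ _ _ _)).trans (Z.hom_comp_le _ _ _)

theorem cpsb_comp {X Y Z : QCat Q} (g : QFun Y Z) (f : QFun X Y) :
    cpsb (g.comp f) = (cpsb f).comp (cpsb g) :=
  QFun.ext fun s τ => Subtype.ext <| funext fun q => funext fun x => by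
    show ((cpsb (g.comp f)).app s τ).1 q x = ((cpsb f).app s ((cpsb g).app s τ)).1 q x
    rw [cpsb_app, cpsb_app, cpsb_app]
    rfl

theorem pshf_comp_y {X Y : QCat Q} (f : QFun X Y) : (pshf f).comp X.y = Y.y.comp f :=
  QFun.ext fun p x => Subtype.ext <| funext fun _ => funext fun _ =>
    le_antisymm
      (iSup₂_le fun q x' => (comp_le_comp (f.mono q p x' x) le_rfl).trans (Y.hom_comp_le _ _ _))
      ((X.le_hom_self_comp _ x).trans (le_iSup₂_of_le p x le_rfl))

theorem cpsf_comp_yd {X Y : QCat Q} (f : QFun X Y) : (cpsf f).comp X.yd = Y.yd.comp f :=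
  QFun.ext fun p x => Subtype.ext <| funext fun _ => funext fun _ =>
    le_antisymm
      (iSup₂_le fun p' x' => (comp_le_comp le_rfl (f.mono p p' x x')).trans (Y.hom_comp_le _ _ _))
      ((X.le_comp_hom_self _ x).trans (le_iSup₂_of_le p x le_rfl))

theorem QAdj.hom_eq {X Y : QCat Q} {f : QFun X Y} {g : QFun Y X} (h : QAdj f g)
    {p q : Q.Obj} (x : X.el p) (y : Y.el q) :
    Y.hom p q (f.app p x) y = X.hom p q x (g.app q y) := by
  apply le_antisymm
  · calc Y.hom p q (f.app p x) y
        = Q.comp (Y.hom p q (f.app p x) y) (Q.idm p) := (Q.comp_idm _).symm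
      _ ≤ Q.comp (X.hom p q (g.app p (f.app p x)) (g.app q y))
            (X.hom p p x (g.app p (f.app p x))) :=
          comp_le_comp (g.mono _ _ _ _) (h.1 p x)
      _ ≤ X.hom p q x (g.app q y) := X.hom_comp_le _ _ _
  · calc X.hom p q x (g.app q y)
        = Q.comp (Q.idm q) (X.hom p q x (g.app q y)) := (Q.idm_comp _).symm
      _ ≤ Q.comp (Y.hom q q (f.app q (g.app q y)) y)
            (Y.hom p q (f.app p x) (f.app q (g.app q y))) :=
          comp_le_comp (h.2 q y) (f.mono _ _ _ _)
      _ ≤ Y.hom p q (f.app p x) y := Y.hom_comp_le _ _ _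

theorem QAdj.graph_eq_cograph {X Y : QCat Q} {f : QFun X Y} {g : QFun Y X} (h : QAdj f g) :
    f.graph = g.cograph :=
  le_antisymm (fun _ _ x y => (h.hom_eq x y).le) (fun _ _ x y => (h.hom_eq x y).ge)

theorem QAdj.pshb_eq_pshf {X Y : QCat Q} {f : QFun X Y} {g : QFun Y X} (h : QAdj f g) :
    pshb f = pshf g :=
  congrArg QDist.fwd h.graph_eq_cograph

theorem QAdj.cpsf_eq_cpsb {X Y : QCat Q} {f : QFun X Y} {g : QFun Y X} (h : QAdj f g) :
    cpsf f = cpsb g :=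
  congrArg QDist.bwd h.graph_eq_cograph

theorem QAdj.fullyFaithful_left {X Y : QCat Q} {f : QFun X Y} {g : QFun Y X} (h : QAdj f g)
    (hgf : g.comp f = QFun.id X) : f.FullyFaithful := fun _ q x x' => by
  have hx' : g.app q (f.app q x') = x' := congrArg (fun k : QFun X X => k.app q x') hgf
  rw [h.hom_eq, hx']

theorem QAdj.fullyFaithful_right {X Y : QCat Q} {f : QFun X Y} {g : QFun Y X} (h : QAdj f g)
    (hfg : f.comp g = QFun.id Y) : g.FullyFaithful := fun p _ y y' => by
  have hy : f.app p (g.app p y) = y := congrArg (fun k : QFun Y Y => k.app p y) hfg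
  rw [← h.hom_eq, hy]

theorem qAdj_pshf_pshb {X Y : QCat Q} (f : QFun X Y) : QAdj (pshf f) (pshb f) := by
  constructor
  · refine QFun.le_P_iff.mpr fun s σ p x => ?_
    show σ.1 p x ≤ ((pshb f).app s ((pshf f).app s σ)).1 p x
    rw [pshb_app]
    exact (Y.le_comp_hom_self (σ.1 p x) (f.app p x)).trans (le_iSup₂_of_le p x le_rfl)
  · refine QFun.le_P_iff.mpr fun s τ p y => iSup₂_le fun q x => ?_
    rw [pshb_app]
    exact τ.2 p q y (f.app q x)

theorem qAdj_cpsb_cpsf {X Y : QCat Q} (f : QFun X Y) : QAdj (cpsb f) (cpsf f) := by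
  constructor
  · refine QFun.le_Pd_iff.mpr fun s τ q y => iSup₂_le fun p x => ?_
    rw [cpsb_app]
    exact τ.2 p q (f.app p x) y
  · refine QFun.le_Pd_iff.mpr fun s τ q x => ?_
    show τ.1 q x ≤ ((cpsb f).app s ((cpsf f).app s τ)).1 q x
    rw [cpsb_app]
    exact (Y.le_hom_self_comp (τ.1 q x) (f.app q x)).trans (le_iSup₂_of_le q x le_rfl)

theorem qAdj_supP_y (X : QCat Q) : QAdj (supP X) (QCat.y X.P) := by
  constructor
  · refine QFun.le_P_iff.mpr fun s Φ q σ => le_iInf₂ fun p x => le_lda.mp ?_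
    show Q.comp (Φ.1 q σ) (σ.1 p x) ≤ ((pshb X.y).app s Φ).1 p x
    rw [pshb_app, ← X.P_hom_y_app x σ]
    exact Φ.2 p q (X.y.app p x) σ
  · rw [supP_comp_y]

theorem pshb_comp_pshf_of_fullyFaithful {X Y : QCat Q} {f : QFun X Y} (hf : f.FullyFaithful) :
    (pshb f).comp (pshf f) = QFun.id X.P :=
  QFun.ext fun s σ => Subtype.ext <| funext fun p => funext fun x => by
    show ((pshb f).app s ((pshf f).app s σ)).1 p x = σ.1 p x
    rw [pshb_app]
    refine le_antisymm (iSup₂_le fun q x' => ?_)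
      ((Y.le_comp_hom_self (σ.1 p x) (f.app p x)).trans (le_iSup₂_of_le p x le_rfl))
    show Q.comp (σ.1 q x') (Y.hom p q (f.app p x) (f.app q x')) ≤ σ.1 p x
    rw [← hf]
    exact σ.2 p q x x'

theorem cpsb_comp_cpsf_of_fullyFaithful {X Y : QCat Q} {f : QFun X Y} (hf : f.FullyFaithful) :
    (cpsb f).comp (cpsf f) = QFun.id X.Pd :=
  QFun.ext fun s τ => Subtype.ext <| funext fun q => funext fun x => by
    show ((cpsb f).app s ((cpsf f).app s τ)).1 q x = τ.1 q x
    rw [cpsb_app]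
    refine le_antisymm (iSup₂_le fun p x' => ?_)
      ((Y.le_hom_self_comp (τ.1 q x) (f.app q x)).trans (le_iSup₂_of_le q x le_rfl))
    show Q.comp (Y.hom p q (f.app p x') (f.app q x)) (τ.1 p x') ≤ τ.1 q x
    rw [← hf]
    exact τ.2 p q x' x

theorem pshf_fullyFaithful {X Y : QCat Q} {f : QFun X Y} (hf : f.FullyFaithful) :
    (pshf f).FullyFaithful :=
  (qAdj_pshf_pshb f).fullyFaithful_left (pshb_comp_pshf_of_fullyFaithful hf)

theorem cpsf_fullyFaithful {X Y : QCat Q} {f : QFun X Y} (hf : f.FullyFaithful) :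
    (cpsf f).FullyFaithful :=
  (qAdj_cpsb_cpsf f).fullyFaithful_right (cpsb_comp_cpsf_of_fullyFaithful hf)

theorem transpose_graph {A B : QCat Q} (g : QFun A B) :
    g.graph.transpose = (pshb g).comp B.y :=
  QFun.ext fun _ b => Subtype.ext <| funext fun _ => funext fun a => (pshb_app g (B.y.app _ b) a).symm

theorem pshf_comp_transpose_graph_le {A B A' B' : QCat Q} {G : QFun A B} {G' : QFun A' B'}
    {h : QFun A A'} {k : QFun B B'} (hsq : G'.comp h ≤ k.comp G) :
    (pshf h).comp G.graph.transpose ≤ G'.graph.transpose.comp k := by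
  refine QFun.le_P_iff.mpr fun s b p a' => iSup₂_le fun q a => ?_
  calc Q.comp (B.hom q s (G.app q a) b) (A'.hom p q a' (h.app q a))
      ≤ Q.comp (B'.hom q s (k.app q (G.app q a)) (k.app s b))
          (B'.hom p q (G'.app p a') (G'.app q (h.app q a))) :=
        comp_le_comp (k.mono _ _ _ _) (G'.mono _ _ _ _)
    _ ≤ Q.comp (B'.hom q s (k.app q (G.app q a)) (k.app s b))
          (B'.hom p q (G'.app p a') (k.app q (G.app q a))) :=
        comp_le_comp le_rfl (B'.hom_mono_right (hsq q a))
    _ ≤ B'.hom p s (G'.app p a') (k.app s b) := B'.hom_comp_le _ _ _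

theorem transpose_graph_comp_of_fullyFaithful {A B : QCat Q} {G : QFun A B}
    (hG : G.FullyFaithful) : G.graph.transpose.comp G = A.y :=
  QFun.ext fun s a => Subtype.ext <| funext fun p => funext fun a' => (hG p s a' a).symm

theorem supP_comp_pshf_transpose_graph_le {A B C : QCat Q} (G : QFun A B) {G' : QFun B C}
    {k : QFun C B} (hk : QFun.id B ≤ k.comp G') :
    (supP A).comp ((pshf G.graph.transpose).comp G'.graph.transpose)
      ≤ G.graph.transpose.comp k := by
  refine QFun.le_P_iff.mpr fun s W p a => ?_
  show ((pshb A.y).app s _).1 p a ≤ B.hom p s (G.app p a) (k.app s W)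
  rw [pshb_app]
  refine iSup₂_le fun q b => ?_
  show Q.comp (C.hom q s (G'.app q b) W) (A.P.hom p q (A.y.app p a) (G.graph.transpose.app q b))
    ≤ _
  rw [A.P_hom_y_app]
  calc Q.comp (C.hom q s (G'.app q b) W) (B.hom p q (G.app p a) b)
      ≤ Q.comp (B.hom q s (k.app q (G'.app q b)) (k.app s W)) (B.hom p q (G.app p a) b) :=
        comp_le_comp (k.mono _ _ _ _) le_rfl
    _ ≤ Q.comp (B.hom q s b (k.app s W)) (B.hom p q (G.app p a) b) :=
        comp_le_comp (B.hom_anti_left (hk q b)) le_rfl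
    _ ≤ B.hom p s (G.app p a) (k.app s W) := B.hom_comp_le _ _ _

theorem pshf_le_of_y_comp_le {X Y : QCat Q} {f : QFun X Y} {F : QFun X.P Y.P}
    (h : Y.y.comp f ≤ F.comp X.y) : pshf f ≤ F := by
  refine QFun.le_P_iff.mpr fun s σ p b => iSup₂_le fun q x => ?_
  calc Q.comp (σ.1 q x) (Y.hom p q b (f.app q x))
      ≤ Q.comp (Y.P.hom q s (F.app q (X.y.app q x)) (F.app s σ))
          ((F.app q (X.y.app q x)).1 p b) := by
        rw [← X.P_hom_y_app x σ]
        exact comp_le_comp (F.mono _ _ _ _) (QFun.le_P_iff.mp h q x p b)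
    _ ≤ (F.app s σ).1 p b := Y.P_hom_comp_le _ _ b

theorem LamPdP_eq_transpose (X : QCat Q) :
    LamPdP X = (cpsf (pshf X.y)).graph.transpose := by
  rw [transpose_graph, (qAdj_pshf_pshb X.y).cpsf_eq_cpsb, (qAdj_cpsb_cpsf _).pshb_eq_pshf]
  rfl

theorem LamPdP_eq_pshb_comp_y (X : QCat Q) :
    LamPdP X = (pshb (cpsf (pshf X.y))).comp (QCat.y X.P.P.Pd) := by
  rw [LamPdP_eq_transpose, transpose_graph]

theorem LamPdP_lax_natural {X Y : QCat Q} (f : QFun X Y) :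
    (pshf (cpsf (pshf f))).comp (LamPdP X) ≤ (LamPdP Y).comp (cpsf (pshf (pshf f))) := by
  have hsq : (cpsf (pshf Y.y)).comp (cpsf (pshf f))
      = (cpsf (pshf (pshf f))).comp (cpsf (pshf X.y)) := by
    rw [← cpsf_comp, ← cpsf_comp, ← pshf_comp, ← pshf_comp, pshf_comp_y]
  rw [LamPdP_eq_transpose, LamPdP_eq_transpose]
  exact pshf_comp_transpose_graph_le (le_of_eq hsq)

theorem LamPdP_comp_map_y (X : QCat Q) :
    (LamPdP X).comp (cpsf (pshf X.y)) = QCat.y X.P.Pd := by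
  rw [LamPdP_eq_transpose]
  exact transpose_graph_comp_of_fullyFaithful
    (cpsf_fullyFaithful (pshf_fullyFaithful X.y_fullyFaithful))

theorem LamPdP_lax_supP (X : QCat Q) :
    (supP X.P.Pd).comp ((pshf (LamPdP X)).comp (LamPdP X.P))
      ≤ (LamPdP X).comp (cpsf (pshf (supP X))) := by
  have hk : (cpsf (pshf (supP X))).comp (cpsf (pshf (QCat.y X.P))) = QFun.id X.P.P.Pd := by
    rw [← cpsf_comp, ← pshf_comp, supP_comp_y, pshf_id, cpsf_id]
  rw [LamPdP_eq_transpose X, LamPdP_eq_transpose X.P]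
  exact supP_comp_pshf_transpose_graph_le _ (le_of_eq hk.symm)

theorem LamPdP_lax_unit (X : QCat Q) :
    pshf ((QCat.yd X.P).comp X.y) ≤ (LamPdP X).comp ((QCat.yd X.P.P).comp (QCat.y X.P)) := by
  refine pshf_le_of_y_comp_le (le_of_eq ?_)
  calc (QCat.y X.P.Pd).comp ((QCat.yd X.P).comp X.y)
      = ((LamPdP X).comp (cpsf (pshf X.y))).comp ((QCat.yd X.P).comp X.y) := by
        rw [LamPdP_comp_map_y]
    _ = (LamPdP X).comp (((cpsf (pshf X.y)).comp (QCat.yd X.P)).comp X.y) := rfl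
    _ = (LamPdP X).comp ((QCat.yd X.P.P).comp ((pshf X.y).comp X.y)) := by
        rw [cpsf_comp_yd]; rfl
    _ = ((LamPdP X).comp ((QCat.yd X.P.P).comp (QCat.y X.P))).comp X.y := by
        rw [pshf_comp_y]; rfl

theorem LamPdP_app (X : QCat Q) {r p : Q.Obj} (V : X.P.P.Pd.el r) (τ : X.P.Pd.el p) :
    ((LamPdP X).app r V).1 p τ = X.P.P.Pd.hom p r ((cpsf (pshf X.y)).app p τ) V := by
  rw [LamPdP_eq_transpose]
  rfl

theorem y_comp_yd_comp_y_le_pshb_LamPdP (X : QCat Q) :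
    (QCat.y X.P.P.Pd).comp ((QCat.yd X.P.P).comp (QCat.y X.P))
      ≤ (pshb (LamPdP X)).comp ((QCat.y X.P.Pd.P).comp ((QCat.y X.P.Pd).comp (QCat.yd X.P))) := by
  refine QFun.le_P_iff.mpr fun q σ r V => ?_
  show X.P.P.Pd.hom r q V ((QCat.yd X.P.P).app q ((QCat.y X.P).app q σ))
    ≤ ((pshb (LamPdP X)).app q _).1 r V
  rw [QCat.Pd_hom_yd_app, pshb_app]
  refine le_iInf₂ fun p τ => le_lda.mp ?_
  show _ ≤ X.P.Pd.hom p q τ ((QCat.yd X.P).app q σ)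
  rw [QCat.Pd_hom_yd_app, LamPdP_app]
  calc Q.comp (V.1 q ((QCat.y X.P).app q σ))
        (X.P.P.Pd.hom p r ((cpsf (pshf X.y)).app p τ) V)
      ≤ ((cpsf (pshf X.y)).app p τ).1 q ((QCat.y X.P).app q σ) := X.P.P.comp_Pd_hom_le _ _ _
    _ = τ.1 q σ := by
        rw [(qAdj_pshf_pshb X.y).cpsf_eq_cpsb, cpsb_app]
        exact congrArg (τ.1 q) (supP_app_y_app σ)

theorem Sdmult_comp_map_LamPdP_le (X : QCat Q) :
    (Sdmult X).comp ((cpsf (supP X.P.Pd)).comp (cpsf (pshf (LamPdP X))))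
      ≤ (cpsf (supP X)).comp (Sdmult X.P) := by
  rw [(qAdj_supP_y _).cpsf_eq_cpsb, (qAdj_supP_y X).cpsf_eq_cpsb,
    (qAdj_pshf_pshb _).cpsf_eq_cpsb]
  simp only [Sdmult, infPd, QFun.comp_assoc, ← cpsb_comp]
  exact cpsb_le_cpsb (y_comp_yd_comp_y_le_pshb_LamPdP X)

theorem LamPdP_lax_Sdmult (X : QCat Q) :
    (pshf (Sdmult X)).comp ((LamPdP X.P.Pd).comp (cpsf (pshf (LamPdP X))))
      ≤ (LamPdP X).comp (Sdmult X.P) := by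
  have hL : (pshf (Sdmult X)).comp ((LamPdP X.P.Pd).comp (cpsf (pshf (LamPdP X))))
      = (pshf ((Sdmult X).comp ((cpsf (supP X.P.Pd)).comp (cpsf (pshf (LamPdP X)))))).comp
          (QCat.y _) := by
    show (pshf (Sdmult X)).comp ((pshf (cpsf (supP X.P.Pd))).comp
      ((QCat.y _).comp (cpsf (pshf (LamPdP X))))) = _
    rw [← pshf_comp_y, pshf_comp, pshf_comp]
    rfl
  have hR : (LamPdP X).comp (Sdmult X.P)
      = (pshf ((cpsf (supP X)).comp (Sdmult X.P))).comp (QCat.y _) := by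
    show (pshf (cpsf (supP X))).comp ((QCat.y _).comp (Sdmult X.P)) = _
    rw [← pshf_comp_y, pshf_comp]
    rfl
  rw [hL, hR]
  exact QFun.comp_le_comp_right (pshf_mono (Sdmult_comp_map_LamPdP_le X)) _

end

/-- the double copresheaf 2-monad `𝔓†𝔓 = (P†P, Y†, S†)` (with
`T = P†P`, `Tf = f_{!†}`, unit `Y†_X = y†_{PX} ∘ y_X` and multiplication
`S†_X = s†_{PX} ∘ (y_{P†PX})^†`) distributes flatly over the presheaf 2-monad by
`Λ†_X = ←(((y_X)_{!†})_*) = ((y_X)_{!†})^! ∘ y_{P†PPX} = (y_X^!)^{†!} ∘ y_{P†PPX}`. -/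
theorem statement12 (Q : Quantaloid.{u}) :
    -- the three descriptions of Λ† agree
    (∀ X : QCat Q,
      LamPdP X = ((cpsf (pshf X.y)).graph).transpose ∧
      LamPdP X = (pshb (cpsf (pshf X.y))).comp (QCat.y X.P.P.Pd)) ∧
    -- (a) lax naturality: (Tf)_! ∘ Λ†_X ≤ Λ†_Y ∘ T(f_!)
    (∀ (X Y : QCat Q) (f : QFun X Y),
      (pshf (cpsf (pshf f))).comp (LamPdP X) ≤ (LamPdP Y).comp (cpsf (pshf (pshf f)))) ∧
    -- (b) strict P-unit law (flatness): Λ†_X ∘ T y_X = y_{TX}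
    (∀ X : QCat Q, (LamPdP X).comp (cpsf (pshf X.y)) = QCat.y X.P.Pd) ∧
    -- (c) lax P-multiplication law
    (∀ X : QCat Q,
      (supP X.P.Pd).comp ((pshf (LamPdP X)).comp (LamPdP X.P))
        ≤ (LamPdP X).comp (cpsf (pshf (supP X)))) ∧
    -- (d) lax T-unit law: (Y†_X)_! ≤ Λ†_X ∘ Y†_{PX}
    (∀ X : QCat Q,
      pshf ((QCat.yd X.P).comp X.y)
        ≤ (LamPdP X).comp ((QCat.yd X.P.P).comp (QCat.y X.P))) ∧
    -- (e) lax T-multiplication law: (S†_X)_! ∘ Λ†_{TX} ∘ T Λ†_X ≤ Λ†_X ∘ S†_{PX}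
    (∀ X : QCat Q,
      (pshf (Sdmult X)).comp ((LamPdP X.P.Pd).comp (cpsf (pshf (LamPdP X))))
        ≤ (LamPdP X).comp (Sdmult X.P)) := by
  exact ⟨fun X => ⟨LamPdP_eq_transpose X, LamPdP_eq_pshb_comp_y X⟩,
    fun _ _ f => LamPdP_lax_natural f, LamPdP_comp_map_y, LamPdP_lax_supP, LamPdP_lax_unit,
    LamPdP_lax_Sdmult⟩

end QT
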